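/- arXiv:1810.10136 — 3 statements merged into one kernel-verified Lean document; each statement's English description precedes it below -/
import Mathlib

section
/- Let X be a finite abstract simplicial complex and σ ∈ X a k-simplex (|σ| = k+1). Then for every n ≥ k+1, the dimension over ℤ/2 of H_n(C_•^σ) equals the dimension over ℤ/2 of the reduced homology H̃_{n−k−1} of the link lk(σ) (i.e. the local homology of σ in degree n is isomorphic to the reduced homology of the link in degree n−k−1). -/
open Finset

variable {V : Type*} [DecidableEq V]

/-- An abstract simplicial complex: a finite set of finite nonempty subsets of `V`,
closed under passing to nonempty subsets. -/
def IsSimplicialComplex (X : Finset (Finset V)) : Prop :=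
  (∀ τ ∈ X, τ.Nonempty) ∧ ∀ τ ∈ X, ∀ ρ ⊆ τ, ρ.Nonempty → ρ ∈ X

/-- `Sn X σ n` is the set of `n`-simplices of `X` containing `σ`. -/
def Sn (X : Finset (Finset V)) (σ : Finset V) (n : ℕ) : Finset (Finset V) :=
  X.filter fun τ => σ ⊆ τ ∧ τ.card = n + 1

/-- The boundary map `∂_{n+1} : C_{n+1}^σ → C_n^σ` of the local chain complex of `σ`
over `ℤ/2`, sending a basis element `τ` to `∑_{v ∈ τ \ σ} (τ \ {v})`. -/
noncomputable def localBoundary (X : Finset (Finset V)) (σ : Finset V) (n : ℕ) :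
    (↥(Sn X σ (n + 1)) → ZMod 2) →ₗ[ZMod 2] (↥(Sn X σ n) → ZMod 2) where
  toFun f ρ := ∑ τ : ↥(Sn X σ (n + 1)),
    (((τ.1 \ σ).filter fun v => τ.1.erase v = ρ.1).card : ZMod 2) * f τ
  map_add' f g := by
    funext ρ
    simp only [Pi.add_apply, mul_add]
    exact Finset.sum_add_distrib
  map_smul' c f := by
    funext ρ
    simp only [Pi.smul_apply, smul_eq_mul, RingHom.id_apply]
    rw [Finset.mul_sum]
    exact Finset.sum_congr rfl fun τ _ => mul_left_comm _ _ _

/-- The cycles `ker ∂_n` of the local chain complex (`∂_0 = 0`, so all of `C_0` in degree 0). -/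
noncomputable def localCycles (X : Finset (Finset V)) (σ : Finset V) :
    (n : ℕ) → Submodule (ZMod 2) (↥(Sn X σ n) → ZMod 2)
  | 0 => ⊤
  | n + 1 => LinearMap.ker (localBoundary X σ n)

/-- The local homology `H_n(C_•^σ) = ker ∂_n / im ∂_{n+1}` over `ℤ/2`. -/
noncomputable abbrev LocalHomology (X : Finset (Finset V)) (σ : Finset V) (n : ℕ) :=
  ↥(localCycles X σ n) ⧸
    (LinearMap.range (localBoundary X σ n)).comap (localCycles X σ n).subtype

/-- The dimension of `H_n(C_•^σ)` over `ℤ/2`. -/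
noncomputable def localHomologyDim (X : Finset (Finset V)) (σ : Finset V) (n : ℕ) : ℕ :=
  Module.finrank (ZMod 2) (LocalHomology X σ n)

/-- The `n`-simplices of a finite abstract simplicial complex `L`
(the members with `n + 1` elements). -/
def simplicesOf (L : Finset (Finset V)) (n : ℕ) : Finset (Finset V) :=
  L.filter fun τ => τ.card = n + 1

/-- The boundary map `∂_{n+1} : C̃_{n+1}(L) → C̃_n(L)` of the reduced chain complex of `L`
over `ℤ/2`, sending a basis element `τ` to `∑_{v ∈ τ} (τ \ {v})`. -/
noncomputable def reducedBoundary (L : Finset (Finset V)) (n : ℕ) :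
    (↥(simplicesOf L (n + 1)) → ZMod 2) →ₗ[ZMod 2] (↥(simplicesOf L n) → ZMod 2) where
  toFun f ρ := ∑ τ : ↥(simplicesOf L (n + 1)),
    ((τ.1.filter fun v => τ.1.erase v = ρ.1).card : ZMod 2) * f τ
  map_add' f g := by
    funext ρ
    simp only [Pi.add_apply, mul_add]
    exact Finset.sum_add_distrib
  map_smul' c f := by
    funext ρ
    simp only [Pi.smul_apply, smul_eq_mul, RingHom.id_apply]
    rw [Finset.mul_sum]
    exact Finset.sum_congr rfl fun τ _ => mul_left_comm _ _ _

/-- The augmentation `∂_0 : C̃_0(L) → C̃_{-1}(L) = ℤ/2`, sending each vertex to `1`. -/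
noncomputable def augmentation (L : Finset (Finset V)) :
    (↥(simplicesOf L 0) → ZMod 2) →ₗ[ZMod 2] ZMod 2 where
  toFun f := ∑ τ : ↥(simplicesOf L 0), f τ
  map_add' f g := by simp [Finset.sum_add_distrib]
  map_smul' c f := by simp [Finset.mul_sum]

/-- The reduced cycles `ker ∂_n` of the reduced chain complex of `L` over `ℤ/2`. -/
noncomputable def reducedCycles (L : Finset (Finset V)) :
    (n : ℕ) → Submodule (ZMod 2) (↥(simplicesOf L n) → ZMod 2)
  | 0 => LinearMap.ker (augmentation L)
  | n + 1 => LinearMap.ker (reducedBoundary L n)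

/-- The reduced homology `H̃_n(L) = ker ∂_n / im ∂_{n+1}` over `ℤ/2`. -/
noncomputable abbrev ReducedHomology (L : Finset (Finset V)) (n : ℕ) :=
  ↥(reducedCycles L n) ⧸
    (LinearMap.range (reducedBoundary L n)).comap (reducedCycles L n).subtype

/-- The dimension of `H̃_n(L)` over `ℤ/2`. -/
noncomputable def reducedHomologyDim (L : Finset (Finset V)) (n : ℕ) : ℕ :=
  Module.finrank (ZMod 2) (ReducedHomology L n)

/-- The link of `σ` in `X`: `lk(σ) = {ρ ∈ X : ρ ∩ σ = ∅ and ρ ∪ σ ∈ X}`. -/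
def link (X : Finset (Finset V)) (σ : Finset V) : Finset (Finset V) :=
  X.filter fun ρ => ρ ∩ σ = ∅ ∧ ρ ∪ σ ∈ X

/-!
Removing `σ` is a bijection `τ ↦ τ \ σ` from the `(k + 1 + m)`-simplices containing `σ` onto
the `m`-simplices of `lk(σ)`. A face of `τ` still containing `σ` is obtained by deleting a
vertex of `τ \ σ`, so this bijection carries the local boundary onto the boundary of the link.
In the lowest degree `C_k^σ = ℤ/2 · σ`, and `∂_{k+1}` becomes the augmentation of the link.
Thus the local chain complex in degrees `≥ k` is the reduced chain complex of the link shifted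
by `k + 1`, and the homologies agree.
-/

section HomologyOfIsomorphicComplexes

open LinearMap

variable {R : Type*} [Ring R] {A B C A' B' C' : Type*}
  [AddCommGroup A] [Module R A] [AddCommGroup B] [Module R B]
  [AddCommGroup C] [Module R C] [AddCommGroup A'] [Module R A']
  [AddCommGroup B'] [Module R B'] [AddCommGroup C'] [Module R C']

theorem map_ker_eq_ker_of_comm {f : B →ₗ[R] C} {g : B' →ₗ[R] C'} (eB : B ≃ₗ[R] B')
    (eC : C ≃ₗ[R] C') (h : ∀ b, eC (f b) = g (eB b)) :
    (ker f).map (eB : B →ₗ[R] B') = ker g := by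
  ext x
  rw [Submodule.map_equiv_eq_comap_symm, Submodule.mem_comap, mem_ker, mem_ker,
    ← eC.map_eq_zero_iff, h, LinearEquiv.coe_coe, eB.apply_symm_apply]

theorem map_range_eq_range_of_comm {f : A →ₗ[R] B} {g : A' →ₗ[R] B'} (eA : A ≃ₗ[R] A')
    (eB : B ≃ₗ[R] B') (h : ∀ a, eB (f a) = g (eA a)) :
    (range f).map (eB : B →ₗ[R] B') = range g := by
  rw [Submodule.map_equiv_eq_comap_symm]
  ext x
  rw [Submodule.mem_comap, LinearMap.mem_range, LinearMap.mem_range, LinearEquiv.coe_coe]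
  constructor
  · rintro ⟨a, ha⟩
    exact ⟨eA a, by rw [← h, ha, eB.apply_symm_apply]⟩
  · rintro ⟨a, rfl⟩
    exact ⟨eA.symm a, by rw [eq_comm, eB.symm_apply_eq, h, eA.apply_symm_apply]⟩

noncomputable def homologyEquivOfComm (f₁ : A →ₗ[R] B) (f₂ : B →ₗ[R] C) (g₁ : A' →ₗ[R] B')
    (g₂ : B' →ₗ[R] C') (eA : A ≃ₗ[R] A') (eB : B ≃ₗ[R] B') (eC : C ≃ₗ[R] C')
    (h₁ : ∀ a, eB (f₁ a) = g₁ (eA a)) (h₂ : ∀ b, eC (f₂ b) = g₂ (eB b)) :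
    (ker f₂ ⧸ (range f₁).comap (ker f₂).subtype) ≃ₗ[R]
      (ker g₂ ⧸ (range g₁).comap (ker g₂).subtype) :=
  Submodule.Quotient.equiv _ _ (eB.ofSubmodules _ _ (map_ker_eq_ker_of_comm eB eC h₂)) <| by
    rw [Submodule.map_equiv_eq_comap_symm]
    ext x
    simp only [Submodule.mem_comap, Submodule.coe_subtype]
    rw [← map_range_eq_range_of_comm eA eB h₁, Submodule.map_equiv_eq_comap_symm]
    rfl

end HomologyOfIsomorphicComplexes

theorem Finset.erase_eq_union_iff_sdiff_erase_eq {α : Type*} [DecidableEq α]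
    {σ τ ρ : Finset α} {v : α} (hστ : σ ⊆ τ) (hρσ : Disjoint ρ σ) (hv : v ∉ σ) :
    τ.erase v = ρ ∪ σ ↔ (τ \ σ).erase v = ρ := by
  have hsdiff : (τ \ σ).erase v = τ.erase v \ σ := by
    rw [erase_eq, erase_eq, _root_.sdiff_right_comm]
  constructor
  · intro h
    rw [hsdiff, h, union_sdiff_cancel_right hρσ]
  · intro h
    rw [← sdiff_union_of_subset (subset_erase.mpr ⟨hστ, hv⟩), ← hsdiff, h]

theorem Finset.filter_erase_eq_union_eq_filter_sdiff_erase_eq {α : Type*} [DecidableEq α]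
    {σ τ ρ : Finset α} (hστ : σ ⊆ τ) (hρσ : Disjoint ρ σ) :
    ((τ \ σ).filter fun v => τ.erase v = ρ ∪ σ) = (τ \ σ).filter fun v => (τ \ σ).erase v = ρ :=
  filter_congr fun _ hv => erase_eq_union_iff_sdiff_erase_eq hστ hρσ (mem_sdiff.mp hv).2

section LocalChains

variable (X : Finset (Finset V)) (σ : Finset V)

theorem mem_Sn {τ : Finset V} {n : ℕ} : τ ∈ Sn X σ n ↔ τ ∈ X ∧ σ ⊆ τ ∧ τ.card = n + 1 :=
  Finset.mem_filter

theorem mem_simplicesOf_link {ρ : Finset V} {m : ℕ} :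
    ρ ∈ simplicesOf (link X σ) m ↔ (ρ ∈ X ∧ Disjoint ρ σ ∧ ρ ∪ σ ∈ X) ∧ ρ.card = m + 1 := by
  simp only [simplicesOf, link, Finset.mem_filter, Finset.disjoint_iff_inter_eq_empty]

variable (hX : IsSimplicialComplex X) (k : ℕ) (hk : σ.card = k + 1)

def snEquivLinkSimplices (m : ℕ) : ↥(Sn X σ (k + m + 1)) ≃ ↥(simplicesOf (link X σ) m) where
  toFun τ := ⟨τ.1 \ σ, by
    obtain ⟨τ, hτ⟩ := τ
    obtain ⟨hτX, hστ, hτcard⟩ := (mem_Sn X σ).mp hτ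
    have hcard : (τ \ σ).card = m + 1 := by
      rw [Finset.card_sdiff_of_subset hστ]; omega
    refine (mem_simplicesOf_link X σ).mpr ⟨⟨?_, Finset.sdiff_disjoint, ?_⟩, hcard⟩
    · exact hX.2 τ hτX _ Finset.sdiff_subset (Finset.card_pos.mp (hcard ▸ m.succ_pos))
    · rwa [Finset.sdiff_union_of_subset hστ]⟩
  invFun ρ := ⟨ρ.1 ∪ σ, by
    obtain ⟨⟨-, hρσ, hρσX⟩, hρcard⟩ := (mem_simplicesOf_link X σ).mp ρ.2
    refine (mem_Sn X σ).mpr ⟨hρσX, Finset.subset_union_right, ?_⟩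
    rw [Finset.card_union_of_disjoint hρσ]
    omega⟩
  left_inv τ := Subtype.ext (Finset.sdiff_union_of_subset ((mem_Sn X σ).mp τ.2).2.1)
  right_inv ρ := Subtype.ext
    (Finset.union_sdiff_cancel_right ((mem_simplicesOf_link X σ).mp ρ.2).1.2.1)

noncomputable def linkChainEquiv (m : ℕ) :
    (↥(Sn X σ (k + m + 1)) → ZMod 2) ≃ₗ[ZMod 2] (↥(simplicesOf (link X σ) m) → ZMod 2) :=
  LinearEquiv.funCongrLeft (ZMod 2) (ZMod 2) (snEquivLinkSimplices X σ hX k hk m).symm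

theorem linkChainEquiv_apply (m : ℕ) (f : ↥(Sn X σ (k + m + 1)) → ZMod 2)
    (ρ : ↥(simplicesOf (link X σ) m)) :
    linkChainEquiv X σ hX k hk m f ρ = f ((snEquivLinkSimplices X σ hX k hk m).symm ρ) :=
  rfl

theorem linkChainEquiv_localBoundary (m : ℕ) (f : ↥(Sn X σ (k + (m + 1) + 1)) → ZMod 2) :
    linkChainEquiv X σ hX k hk m (localBoundary X σ (k + m + 1) f)
      = reducedBoundary (link X σ) m (linkChainEquiv X σ hX k hk (m + 1) f) := by
  funext ρ
  refine Fintype.sum_equiv (snEquivLinkSimplices X σ hX k hk (m + 1)) _ _ fun τ => ?_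
  rw [linkChainEquiv_apply, Equiv.symm_apply_apply]
  congr 2
  exact congrArg Finset.card <| Finset.filter_erase_eq_union_eq_filter_sdiff_erase_eq
    ((mem_Sn X σ).mp τ.2).2.1 ((mem_simplicesOf_link X σ).mp ρ.2).1.2.1

variable (hσ : σ ∈ X)

abbrev uniqueSnSelf : Unique ↥(Sn X σ k) where
  default := ⟨σ, (mem_Sn X σ).mpr ⟨hσ, subset_rfl, hk⟩⟩
  uniq τ := by
    obtain ⟨-, hστ, hτcard⟩ := (mem_Sn X σ).mp τ.2
    exact Subtype.ext (Finset.eq_of_subset_of_card_le hστ (by omega)).symm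

noncomputable def selfChainEquiv : (↥(Sn X σ k) → ZMod 2) ≃ₗ[ZMod 2] ZMod 2 :=
  letI := uniqueSnSelf X σ k hk hσ
  LinearEquiv.funUnique _ _ _

theorem selfChainEquiv_localBoundary (f : ↥(Sn X σ (k + 0 + 1)) → ZMod 2) :
    selfChainEquiv X σ k hk hσ (localBoundary X σ k f)
      = augmentation (link X σ) (linkChainEquiv X σ hX k hk 0 f) := by
  refine Fintype.sum_equiv (snEquivLinkSimplices X σ hX k hk 0) _ _ fun τ => ?_
  obtain ⟨-, hστ, hτcard⟩ := (mem_Sn X σ).mp τ.2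
  obtain ⟨v, hv⟩ : ∃ v, τ.1 \ σ = {v} :=
    Finset.card_eq_one.mp (by rw [Finset.card_sdiff_of_subset hστ]; omega)
  have hcoeff := Finset.filter_erase_eq_union_eq_filter_sdiff_erase_eq hστ
    (Finset.disjoint_empty_left σ)
  rw [Finset.empty_union] at hcoeff
  rw [linkChainEquiv_apply, Equiv.symm_apply_apply]
  show (((τ.1 \ σ).filter fun w => τ.1.erase w = σ).card : ZMod 2) * f τ = f τ
  rw [hcoeff, hv, Finset.filter_singleton, Finset.erase_singleton, if_pos rfl,
    Finset.card_singleton, Nat.cast_one, one_mul]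

end LocalChains

/-- For a `k`-simplex `σ` in a finite abstract simplicial complex `X` and
any `n ≥ k + 1`, the local homology `H_n(C_•^σ)` over `ℤ/2` has the same dimension as the
reduced homology `H̃_{n-k-1}(lk(σ))` of the link of `σ` over `ℤ/2`. -/
theorem localHomologyDim_eq_reducedHomologyDim_link
    {V : Type*} [DecidableEq V] (X : Finset (Finset V)) (hX : IsSimplicialComplex X)
    (σ : Finset V) (hσ : σ ∈ X) (k : ℕ) (hk : σ.card = k + 1) :
    ∀ n, k + 1 ≤ n →
      localHomologyDim X σ n = reducedHomologyDim (link X σ) (n - (k + 1)) := by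
  intro n hn
  obtain ⟨m, rfl⟩ : ∃ m, n = k + m + 1 := ⟨n - (k + 1), by omega⟩
  rw [show k + m + 1 - (k + 1) = m by omega]
  refine LinearEquiv.finrank_eq ?_
  cases m with
  | zero =>
    exact homologyEquivOfComm _ _ _ _ (linkChainEquiv X σ hX k hk 1)
      (linkChainEquiv X σ hX k hk 0) (selfChainEquiv X σ k hk hσ)
      (linkChainEquiv_localBoundary X σ hX k hk 0)
      (selfChainEquiv_localBoundary X σ hX k hk hσ)
  | succ m =>
    exact homologyEquivOfComm _ _ _ _ (linkChainEquiv X σ hX k hk (m + 2))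
      (linkChainEquiv X σ hX k hk (m + 1)) (linkChainEquiv X σ hX k hk m)
      (linkChainEquiv_localBoundary X σ hX k hk (m + 1))
      (linkChainEquiv_localBoundary X σ hX k hk m)
end

section
/- For k ≥ 1 let X_k be the simplicial closure of {{0, 1, i+2} : i ∈ {0, 1, …, k−1}} and let σ = {0,1}. Then the local chain complex of σ over ℤ/2 satisfies: H_2(C_•^σ) has dimension k−1 over ℤ/2, and H_n(C_•^σ) = 0 for every n ≠ 2. -/
open Finset

variable {V : Type*} [DecidableEq V]

/-- `Xk k` is the simplicial closure of `{{0, 1, i+2} : i ∈ {0, …, k-1}}`: the abstract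
simplicial complex consisting of all nonempty subsets of the sets `{0, 1, i+2}`
(`k` triangles glued along the common edge `{0, 1}`). -/
def Xk (k : ℕ) : Finset (Finset ℕ) :=
  (Finset.range k).biUnion fun i =>
    ({0, 1, i + 2} : Finset ℕ).powerset.filter fun ρ => ρ.Nonempty

/-
The local chain complex of the common edge `σ = {0, 1}` of `X_k` is `C_2 → C_1`, with one basis
element `{0, 1}` in degree 1 and the `k` triangles in degree 2, every triangle being sent to
`{0, 1}`. This map is onto, so `H_1 = 0` and `H_2` is its kernel, of dimension `k - 1`; all other
chain groups vanish.
-/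

section LocalChainComplex

variable (X : Finset (Finset V)) (σ : Finset V)

lemma localBoundary_apply {n : ℕ} (f : ↥(Sn X σ (n + 1)) → ZMod 2) (ρ : ↥(Sn X σ n)) :
    localBoundary X σ n f ρ = ∑ τ : ↥(Sn X σ (n + 1)),
      (((τ.1 \ σ).filter fun v => τ.1.erase v = ρ.1).card : ZMod 2) * f τ :=
  rfl

variable {X σ}

lemma Sn_eq_empty_of_lt_card {n : ℕ} (h : n + 1 < σ.card) : Sn X σ n = ∅ := by
  refine filter_false_of_mem fun τ _ ⟨hστ, hτ⟩ => ?_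
  have := card_le_card hστ
  omega

lemma Sn_eq_empty_of_card_le {m n : ℕ} (hX : ∀ τ ∈ X, τ.card ≤ m) (h : m < n + 1) :
    Sn X σ n = ∅ :=
  filter_false_of_mem fun τ hτ ⟨_, hcard⟩ => by have := hX τ hτ; omega

lemma Sn_eq_singleton_self {n : ℕ} (hσ : σ ∈ X) (h : σ.card = n + 1) : Sn X σ n = {σ} := by
  ext τ
  simp only [Sn, mem_filter, mem_singleton]
  constructor
  · rintro ⟨-, hστ, hτ⟩
    exact (eq_of_subset_of_card_le hστ (by omega)).symm
  · rintro rfl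
    exact ⟨hσ, subset_rfl, h⟩

lemma localHomology_subsingleton_of_Sn_eq_empty {n : ℕ} (h : Sn X σ n = ∅) :
    Subsingleton (LocalHomology X σ n) := by
  have : IsEmpty ↥(Sn X σ n) := isEmpty_coe_sort.mpr h
  infer_instance

lemma localHomology_subsingleton_of_surjective {n : ℕ}
    (h : Function.Surjective (localBoundary X σ n)) : Subsingleton (LocalHomology X σ n) := by
  rw [Submodule.Quotient.subsingleton_iff, Submodule.comap_subtype_eq_top,
    LinearMap.range_eq_top.mpr h]
  exact le_top

/-- In the top degree `n + 1` the homology is the whole kernel of `∂_{n+1}`, whose dimension is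
read off from rank–nullity when `∂_{n+1}` is onto. -/
lemma localHomologyDim_of_surjective_of_Sn_eq_empty {n : ℕ} (hempty : Sn X σ (n + 2) = ∅)
    (hsurj : Function.Surjective (localBoundary X σ n)) :
    localHomologyDim X σ (n + 1) = #(Sn X σ (n + 1)) - #(Sn X σ n) := by
  have : IsEmpty ↥(Sn X σ (n + 2)) := isEmpty_coe_sort.mpr hempty
  have hbot : (LinearMap.range (localBoundary X σ (n + 1))).comap
      (localCycles X σ (n + 1)).subtype = ⊥ := by
    rw [LinearMap.range_eq_bot.mpr (Subsingleton.elim _ 0), Submodule.comap_bot,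
      Submodule.ker_subtype]
  have hrank := LinearMap.finrank_range_add_finrank_ker (localBoundary X σ n)
  rw [LinearMap.range_eq_top.mpr hsurj, finrank_top, Module.finrank_fintype_fun_eq_card,
    Module.finrank_fintype_fun_eq_card, Fintype.card_coe, Fintype.card_coe] at hrank
  rw [localHomologyDim, (Submodule.quotEquivOfEqBot _ hbot).finrank_eq]
  change Module.finrank (ZMod 2) (LinearMap.ker (localBoundary X σ n)) = _
  omega

lemma card_filter_erase_eq_of_card_eq_succ {τ : Finset V} (hστ : σ ⊆ τ)
    (hcard : τ.card = σ.card + 1) : ((τ \ σ).filter fun v => τ.erase v = σ).card = 1 := by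
  obtain ⟨v, hv⟩ := card_eq_one.mp (by rw [card_sdiff_of_subset hστ]; omega :
    (τ \ σ).card = 1)
  have hvσ : v ∉ σ := (mem_sdiff.mp (hv ▸ mem_singleton_self v)).2
  have hvτ : v ∈ τ := (mem_sdiff.mp (hv ▸ mem_singleton_self v)).1
  have herase : τ.erase v = σ := by
    refine (eq_of_subset_of_card_le (fun x hx => mem_erase.mpr ⟨?_, hστ hx⟩) ?_).symm
    · rintro rfl
      exact hvσ hx
    · rw [card_erase_of_mem hvτ]
      omega
  rw [hv, filter_singleton, if_pos herase, card_singleton]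

/-- If `σ` is itself an `n`-simplex, `C_n^σ` is spanned by `σ`, and any `(n+1)`-simplex containing
`σ` is a preimage of it. -/
lemma localBoundary_surjective_of_mem {n : ℕ} {τ : Finset V} (hσ : σ ∈ X)
    (hcard : σ.card = n + 1) (hτ : τ ∈ Sn X σ (n + 1)) :
    Function.Surjective (localBoundary X σ n) := by
  have hσn : σ ∈ Sn X σ n := by rw [Sn_eq_singleton_self hσ hcard]; exact mem_singleton_self σ
  have hρ : ∀ ρ : ↥(Sn X σ n), ρ = ⟨σ, hσn⟩ := fun ρ =>
    Subtype.ext (mem_singleton.mp (Sn_eq_singleton_self hσ hcard ▸ ρ.2))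
  have hτcard : τ.card = σ.card + 1 := by rw [(mem_filter.mp hτ).2.2, hcard]
  intro g
  refine ⟨Pi.single ⟨τ, hτ⟩ (g ⟨σ, hσn⟩), funext fun ρ => ?_⟩
  rw [hρ ρ, localBoundary_apply, Fintype.sum_eq_single ⟨τ, hτ⟩ fun τ' hτ' => by
      rw [Pi.single_eq_of_ne hτ', mul_zero],
    Pi.single_eq_same, card_filter_erase_eq_of_card_eq_succ (mem_filter.mp hτ).2.1 hτcard,
    Nat.cast_one, one_mul]

end LocalChainComplex

section TrianglesOnCommonEdge

lemma mem_Xk {k : ℕ} {ρ : Finset ℕ} : ρ ∈ Xk k ↔ ∃ i < k, ρ ⊆ {0, 1, i + 2} ∧ ρ.Nonempty := by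
  simp [Xk]

lemma card_triangle (i : ℕ) : ({0, 1, i + 2} : Finset ℕ).card = 3 := by
  rw [card_insert_of_notMem (by simp), card_insert_of_notMem (by simp), card_singleton]

lemma triangle_injective : Function.Injective fun i : ℕ => ({0, 1, i + 2} : Finset ℕ) := by
  intro a b h
  have : a + 2 ∈ ({0, 1, b + 2} : Finset ℕ) := (congrArg (a + 2 ∈ ·) h).mp (by simp)
  simp only [mem_insert, mem_singleton] at this
  omega

lemma card_le_three_of_mem_Xk {k : ℕ} {ρ : Finset ℕ} (hρ : ρ ∈ Xk k) : ρ.card ≤ 3 := by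
  obtain ⟨i, -, hsub, -⟩ := mem_Xk.mp hρ
  exact card_triangle i ▸ card_le_card hsub

lemma edge_mem_Xk {k : ℕ} (hk : 1 ≤ k) : ({0, 1} : Finset ℕ) ∈ Xk k :=
  mem_Xk.mpr ⟨0, hk, by intro x; simp only [mem_insert, mem_singleton]; tauto, ⟨0, by simp⟩⟩

lemma Sn_Xk_two (k : ℕ) :
    Sn (Xk k) {0, 1} 2 = (range k).image fun i => ({0, 1, i + 2} : Finset ℕ) := by
  ext τ
  simp only [Sn, mem_filter, mem_image, mem_range]
  constructor
  · rintro ⟨hX, -, hcard⟩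
    obtain ⟨i, hi, hsub, -⟩ := mem_Xk.mp hX
    exact ⟨i, hi, (eq_of_subset_of_card_le hsub (by rw [hcard, card_triangle])).symm⟩
  · rintro ⟨i, hi, rfl⟩
    exact ⟨mem_Xk.mpr ⟨i, hi, subset_rfl, ⟨0, by simp⟩⟩, by intro x; simp only [mem_insert, mem_singleton]; tauto,
      card_triangle i⟩

lemma card_Sn_Xk_two (k : ℕ) : #(Sn (Xk k) {0, 1} 2) = k := by
  rw [Sn_Xk_two, card_image_of_injective _ triangle_injective, card_range]

end TrianglesOnCommonEdge

/-- For `k ≥ 1`, the local homology over `ℤ/2` of the common edge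
`σ = {0, 1}` in `X_k` is concentrated in degree 2, where it has dimension `k - 1`. -/
theorem local_homology_Xk_common_edge (k : ℕ) (hk : 1 ≤ k) :
    localHomologyDim (Xk k) {0, 1} 2 = k - 1 ∧
      ∀ n, n ≠ 2 → Subsingleton (LocalHomology (Xk k) {0, 1} n) := by
  have hσ := edge_mem_Xk hk
  have hτ : ({0, 1, 2} : Finset ℕ) ∈ Sn (Xk k) {0, 1} 2 := by
    rw [Sn_Xk_two]
    exact mem_image.mpr ⟨0, mem_range.mpr hk, rfl⟩
  have hsurj := localBoundary_surjective_of_mem (n := 1) hσ rfl hτ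
  have hhigh : ∀ n, 3 ≤ n → Sn (Xk k) {0, 1} n = ∅ := fun n hn =>
    Sn_eq_empty_of_card_le (fun _ => card_le_three_of_mem_Xk) (by omega)
  refine ⟨?_, fun n hn => ?_⟩
  · rw [localHomologyDim_of_surjective_of_Sn_eq_empty (hhigh 3 le_rfl) hsurj, card_Sn_Xk_two,
      Sn_eq_singleton_self (n := 1) hσ rfl, card_singleton]
  · match n, hn with
    | 0, _ => exact localHomology_subsingleton_of_Sn_eq_empty (Sn_eq_empty_of_lt_card (by simp))
    | 1, _ => exact localHomology_subsingleton_of_surjective hsurj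
    | n + 3, _ => exact localHomology_subsingleton_of_Sn_eq_empty (hhigh (n + 3) (by omega))
end

section
/- Let X be a finite abstract simplicial complex and v a vertex of X (so {v} ∈ X) whose link lk({v}) is nonempty. Let G be the graph whose vertices are the elements w with {w} ∈ lk({v}) and whose edges are the pairs {w, w′} with {w, w′} ∈ lk({v}). Then the dimension over ℤ/2 of H_1(C_•^{\{v\}}) equals c − 1, where c is the number of connected components of G. -/
open Finset

variable {V : Type*} [DecidableEq V]

namespace Aux13
variable {X : Finset (Finset V)} {v : V}

lemma mem_link_iff {ρ : Finset V} :
    ρ ∈ link X {v} ↔ ρ ∈ X ∧ ρ ∩ {v} = ∅ ∧ ρ ∪ {v} ∈ X := by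
  simp [link]

lemma mem_Sn_iff {τ : Finset V} {n : ℕ} :
    τ ∈ Sn X {v} n ↔ τ ∈ X ∧ {v} ⊆ τ ∧ τ.card = n + 1 := by
  simp [Sn]

lemma singleton_mem_link (hX : IsSimplicialComplex X) {w : V} {ρ : Finset V}
    (hρ : ρ ∈ link X {v}) (hw : w ∈ ρ) : ({w} : Finset V) ∈ link X {v} := by
  rw [mem_link_iff] at hρ ⊢
  obtain ⟨h1, h2, h3⟩ := hρ
  have hwv : w ≠ v := by
    intro h
    have : w ∈ ρ ∩ {v} := mem_inter.mpr ⟨hw, by simp [h]⟩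
    simp [h2] at this
  refine ⟨hX.2 _ h1 _ (by simpa using hw) ⟨w, by simp⟩, by simp [hwv], ?_⟩
  exact hX.2 _ h3 _ (by intro x hx; simp at hx ⊢; rcases hx with h | h; exact Or.inr (h ▸ hw); exact Or.inl h) ⟨w, by simp⟩

lemma pair_mem_Sn (hX : IsSimplicialComplex X) {w : V}
    (hw : ({w} : Finset V) ∈ link X {v}) : ({v, w} : Finset V) ∈ Sn X {v} 1 := by
  rw [mem_link_iff] at hw
  obtain ⟨h1, h2, h3⟩ := hw
  have hwv : w ≠ v := by
    intro h; subst h; simp at h2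
  have : ({w} ∪ {v} : Finset V) = {v, w} := by
    ext x; simp [or_comm]
  rw [mem_Sn_iff]
  refine ⟨this ▸ h3, by simp, ?_⟩
  rw [card_insert_of_notMem (by simp [Ne.symm hwv]), card_singleton]

lemma S1_struct (hX : IsSimplicialComplex X) {τ : Finset V} (hτ : τ ∈ Sn X {v} 1) :
    ∃ w : V, ({w} : Finset V) ∈ link X {v} ∧ τ = {v, w} := by
  rw [mem_Sn_iff] at hτ
  obtain ⟨h1, h2, h3⟩ := hτ
  have hv : v ∈ τ := by simpa using h2
  have hcard : (τ.erase v).card = 1 := by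
    rw [card_erase_of_mem hv, h3]
  obtain ⟨w, hw⟩ := card_eq_one.mp hcard
  have hwτ : w ∈ τ := (erase_subset _ _) (hw ▸ mem_singleton_self w)
  have hwv : w ≠ v := by
    have : w ∈ τ.erase v := hw ▸ mem_singleton_self w
    exact (mem_erase.mp this).1
  have hτeq : τ = {v, w} := by
    rw [← insert_erase hv, hw]
  refine ⟨w, ?_, hτeq⟩
  rw [mem_link_iff]
  refine ⟨hX.2 _ h1 _ (by simpa using hwτ) ⟨w, by simp⟩, by simp [hwv], ?_⟩
  have : ({w} ∪ {v} : Finset V) = τ := by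
    rw [hτeq]; ext x; simp [or_comm]
  rw [this]; exact h1

lemma S0_eq (hv : ({v} : Finset V) ∈ X) : Sn X {v} 0 = {({v} : Finset V)} := by
  ext τ
  rw [mem_Sn_iff, mem_singleton]
  constructor
  · rintro ⟨h1, h2, h3⟩
    exact (Finset.eq_of_subset_of_card_le h2 (by simp [h3])).symm
  · rintro rfl
    exact ⟨hv, Subset.rfl, rfl⟩

lemma S2_struct (hX : IsSimplicialComplex X) {τ : Finset V} (hτ : τ ∈ Sn X {v} 2) :
    ∃ a b : V, a ≠ b ∧ ({a} : Finset V) ∈ link X {v} ∧ ({b} : Finset V) ∈ link X {v} ∧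
      ({a, b} : Finset V) ∈ link X {v} ∧ τ = {v, a, b} := by
  rw [mem_Sn_iff] at hτ
  obtain ⟨h1, h2, h3⟩ := hτ
  have hv : v ∈ τ := by simpa using h2
  have hcard : (τ.erase v).card = 2 := by
    rw [card_erase_of_mem hv, h3]
  obtain ⟨a, b, hab, hw⟩ := card_eq_two.mp hcard
  have haτ : a ∈ τ ∧ a ≠ v := by
    have : a ∈ τ.erase v := hw ▸ (by simp)
    exact ⟨(erase_subset _ _) this, (mem_erase.mp this).1⟩
  have hbτ : b ∈ τ ∧ b ≠ v := by
    have : b ∈ τ.erase v := hw ▸ (by simp)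
    exact ⟨(erase_subset _ _) this, (mem_erase.mp this).1⟩
  have hτeq : τ = {v, a, b} := by
    rw [← insert_erase hv, hw]
  have hablink : ({a, b} : Finset V) ∈ link X {v} := by
    rw [mem_link_iff]
    refine ⟨hX.2 _ h1 _ ?_ ⟨a, by simp⟩, ?_, ?_⟩
    · intro x hx; simp at hx; rcases hx with rfl | rfl; exacts [haτ.1, hbτ.1]
    · ext x; simp; rintro (rfl | rfl) rfl; exacts [haτ.2 rfl, hbτ.2 rfl]
    · have : ({a, b} ∪ {v} : Finset V) = τ := by
        rw [hτeq]; ext x; simp; tauto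
      rw [this]; exact h1
  exact ⟨a, b, hab, singleton_mem_link hX hablink (by simp),
    singleton_mem_link hX hablink (by simp), hablink, hτeq⟩

lemma triple_mem_Sn (hX : IsSimplicialComplex X) {a b : V} (hab : a ≠ b)
    (hav : a ≠ v) (hbv : b ≠ v)
    (h : ({a, b} : Finset V) ∈ link X {v}) : ({v, a, b} : Finset V) ∈ Sn X {v} 2 := by
  rw [mem_link_iff] at h
  obtain ⟨h1, h2, h3⟩ := h
  have he : ({a, b} ∪ {v} : Finset V) = {v, a, b} := by
    ext x; simp; tauto
  rw [mem_Sn_iff]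
  refine ⟨he ▸ h3, by simp, ?_⟩
  rw [card_insert_of_notMem (by simp [Ne.symm hav, Ne.symm hbv]),
    card_insert_of_notMem (by simp [hab]), card_singleton]

end Aux13

namespace Aux13
variable {X : Finset (Finset V)} {v : V}

/-- The subtype of vertices of the link. -/
abbrev W (X : Finset (Finset V)) (v : V) := {w : V // ({w} : Finset V) ∈ link X {v}}

lemma W_ne_v (w : W X v) : w.1 ≠ v := by
  have h := w.2
  rw [mem_link_iff] at h
  intro hc
  have : w.1 ∈ ({w.1} : Finset V) ∩ {v} := by simp [hc]
  simp [h.2.1] at this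

noncomputable instance : Fintype (W X v) :=
  Fintype.ofInjective (fun w : W X v => (⟨{w.1}, w.2⟩ : ↥(link X {v})))
    (fun a b h => Subtype.ext (Finset.singleton_injective (congrArg Subtype.val h)))

/-- `W → S1`. -/
def sig (hX : IsSimplicialComplex X) (w : W X v) : ↥(Sn X {v} 1) :=
  ⟨{v, w.1}, pair_mem_Sn hX w.2⟩

/-- `S1 → W`, inverse of `sig`. -/
noncomputable def pim (hX : IsSimplicialComplex X) (τ : ↥(Sn X {v} 1)) : W X v :=
  ⟨(S1_struct hX τ.2).choose, (S1_struct hX τ.2).choose_spec.1⟩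

lemma pim_spec (hX : IsSimplicialComplex X) (τ : ↥(Sn X {v} 1)) :
    τ.1 = {v, (pim hX τ).1} := (S1_struct hX τ.2).choose_spec.2

lemma pim_sig (hX : IsSimplicialComplex X) (w : W X v) : pim hX (sig hX w) = w := by
  have h := pim_spec hX (sig hX w)
  have h2 : ({v, w.1} : Finset V) = {v, (pim hX (sig hX w)).1} := h
  have hmem : (pim hX (sig hX w)).1 ∈ ({v, w.1} : Finset V) := by
    rw [h2]; simp
  rcases mem_insert.mp hmem with hc | hc
  · exact absurd hc (W_ne_v _)
  · have hmem' : w.1 ∈ ({v, (pim hX (sig hX w)).1} : Finset V) := by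
      rw [← h2]; simp
    rcases mem_insert.mp hmem' with hc' | hc'
    · exact absurd hc' (W_ne_v _)
    · exact Subtype.ext (mem_singleton.mp hc)

lemma sig_pim (hX : IsSimplicialComplex X) (τ : ↥(Sn X {v} 1)) : sig hX (pim hX τ) = τ :=
  Subtype.ext (pim_spec hX τ).symm

lemma pim_injective (hX : IsSimplicialComplex X) :
    Function.Injective (pim (X := X) (v := v) hX) := by
  intro a b h
  have := congrArg (sig hX) h
  rwa [sig_pim, sig_pim] at this

/-- `sig ∘ pim = id` etc: `pim` is a bijection. -/
noncomputable def pimEquiv (hX : IsSimplicialComplex X) : ↥(Sn X {v} 1) ≃ W X v where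
  toFun := pim hX
  invFun := sig hX
  left_inv := sig_pim hX
  right_inv := pim_sig hX

end Aux13

namespace Aux13
variable {X : Finset (Finset V)} {v : V}

lemma localBoundary_single {n : ℕ} (t : ↥(Sn X {v} (n+1))) (ρ : ↥(Sn X {v} n)) :
    localBoundary X {v} n (Pi.single t 1) ρ =
      (((t.1 \ {v}).filter fun u => t.1.erase u = ρ.1).card : ZMod 2) := by
  show (∑ τ : ↥(Sn X {v} (n + 1)),
    (((τ.1 \ {v}).filter fun u => τ.1.erase u = ρ.1).card : ZMod 2) * (Pi.single t 1 : ↥(Sn X {v} (n+1)) → ZMod 2) τ) =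
    (((t.1 \ {v}).filter fun u => t.1.erase u = ρ.1).card : ZMod 2)
  rw [Fintype.sum_eq_single t]
  · simp
  · intro τ hτ
    rw [Pi.single_eq_of_ne hτ, mul_zero]

lemma boundary_single_pair (hX : IsSimplicialComplex X) (a b : W X v) (hab : a.1 ≠ b.1)
    (hlk : ({a.1, b.1} : Finset V) ∈ link X {v}) :
    localBoundary X {v} 1
      (Pi.single (⟨{v, a.1, b.1}, triple_mem_Sn hX hab (W_ne_v a) (W_ne_v b) hlk⟩ :
        ↥(Sn X {v} 2)) 1) =
      Pi.single (sig hX a) 1 + Pi.single (sig hX b) 1 := by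
  funext ρ
  rw [localBoundary_single]
  set t : Finset V := {v, a.1, b.1} with ht
  have hav := W_ne_v a
  have hbv := W_ne_v b
  have hdiff : t \ {v} = {a.1, b.1} := by
    ext x; simp [ht]
    constructor
    · rintro ⟨rfl | rfl | rfl, hx⟩
      · exact absurd rfl hx
      · exact Or.inl rfl
      · exact Or.inr rfl
    · rintro (rfl | rfl)
      · exact ⟨Or.inr (Or.inl rfl), hav⟩
      · exact ⟨Or.inr (Or.inr rfl), hbv⟩
  have hea : t.erase a.1 = {v, b.1} := by
    ext x; simp [ht]
    constructor
    · rintro ⟨hx, rfl | rfl | rfl⟩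
      · exact Or.inl rfl
      · exact absurd rfl hx
      · exact Or.inr rfl
    · rintro (rfl | rfl)
      · exact ⟨Ne.symm hav, Or.inl rfl⟩
      · exact ⟨Ne.symm hab, Or.inr (Or.inr rfl)⟩
  have heb : t.erase b.1 = {v, a.1} := by
    ext x; simp [ht]
    constructor
    · rintro ⟨hx, rfl | rfl | rfl⟩
      · exact Or.inl rfl
      · exact Or.inr rfl
      · exact absurd rfl hx
    · rintro (rfl | rfl)
      · exact ⟨Ne.symm hbv, Or.inl rfl⟩
      · exact ⟨hab, Or.inr (Or.inl rfl)⟩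
  rw [hdiff, card_filter, Finset.sum_pair hab, hea, heb]
  have h1 : (({v, b.1} : Finset V) = ρ.1) ↔ ρ = sig hX b := by
    rw [Subtype.ext_iff]; exact eq_comm
  have h2 : (({v, a.1} : Finset V) = ρ.1) ↔ ρ = sig hX a := by
    rw [Subtype.ext_iff]; exact eq_comm
  rw [Pi.add_apply, Pi.single_apply, Pi.single_apply]
  push_cast
  rw [if_congr h1 rfl rfl, if_congr h2 rfl rfl, add_comm]

end Aux13

namespace Aux13
variable {X : Finset (Finset V)} {v : V}

open scoped Classical

/-- Component-sum map. -/
noncomputable def Phi (hX : IsSimplicialComplex X) (G : SimpleGraph (W X v)) :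
    (↥(Sn X {v} 1) → ZMod 2) →ₗ[ZMod 2] (G.ConnectedComponent → ZMod 2) where
  toFun f c := ∑ τ : ↥(Sn X {v} 1),
    if G.connectedComponentMk (pim hX τ) = c then f τ else 0
  map_add' f g := by
    funext c
    rw [Pi.add_apply, ← Finset.sum_add_distrib]
    refine Finset.sum_congr rfl fun τ _ => ?_
    split <;> simp
  map_smul' r f := by
    funext c
    rw [RingHom.id_apply, Pi.smul_apply, smul_eq_mul, Finset.mul_sum]
    refine Finset.sum_congr rfl fun τ _ => ?_
    split <;> simp

lemma char2_rearrange (x y w : ZMod 2) : x + w = x + y + (y + w) := by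
  revert x y w; decide

lemma Phi_single (hX : IsSimplicialComplex X) (G : SimpleGraph (W X v))
    (τ : ↥(Sn X {v} 1)) :
    Phi hX G (Pi.single τ 1) =
      fun c => if G.connectedComponentMk (pim hX τ) = c then 1 else 0 := by
  funext c
  show (∑ τ' : ↥(Sn X {v} 1),
    if G.connectedComponentMk (pim hX τ') = c
      then (Pi.single τ 1 : ↥(Sn X {v} 1) → ZMod 2) τ' else 0) = _
  rw [Fintype.sum_eq_single τ]
  · simp
  · intro τ' hτ'
    rw [Pi.single_eq_of_ne hτ']
    split <;> rfl

lemma Phi_single_sig (hX : IsSimplicialComplex X) (G : SimpleGraph (W X v)) (w : W X v) :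
    Phi hX G (Pi.single (sig hX w) 1) =
      fun c => if G.connectedComponentMk w = c then 1 else 0 := by
  rw [Phi_single, pim_sig]

lemma Phi_edge (hX : IsSimplicialComplex X) (G : SimpleGraph (W X v)) {a b : W X v}
    (hadj : G.Adj a b) :
    Phi hX G (Pi.single (sig hX a) 1 + Pi.single (sig hX b) 1) = 0 := by
  rw [map_add, Phi_single_sig, Phi_single_sig]
  funext c
  have hcc : G.connectedComponentMk a = G.connectedComponentMk b :=
    SimpleGraph.ConnectedComponent.eq.mpr hadj.reachable
  rw [Pi.add_apply, Pi.zero_apply, hcc]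
  exact CharTwo.add_self_eq_zero _

lemma edge_mem_range (hX : IsSimplicialComplex X) (G : SimpleGraph (W X v))
    (hG : ∀ a b, G.Adj a b ↔ a ≠ b ∧ ({a.1, b.1} : Finset V) ∈ link X {v})
    {a b : W X v} (hadj : G.Adj a b) :
    Pi.single (sig hX a) 1 + Pi.single (sig hX b) 1 ∈
      LinearMap.range (localBoundary X {v} 1) := by
  obtain ⟨hne, hlk⟩ := (hG a b).mp hadj
  have hab : a.1 ≠ b.1 := fun h => hne (Subtype.ext h)
  exact ⟨_, boundary_single_pair hX a b hab hlk⟩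

lemma reachable_mem_range (hX : IsSimplicialComplex X) (G : SimpleGraph (W X v))
    (hG : ∀ a b, G.Adj a b ↔ a ≠ b ∧ ({a.1, b.1} : Finset V) ∈ link X {v})
    {a b : W X v} (h : G.Reachable a b) :
    Pi.single (sig hX a) 1 + Pi.single (sig hX b) 1 ∈
      LinearMap.range (localBoundary X {v} 1) := by
  obtain ⟨p⟩ := h
  induction p with
  | nil =>
    rename_i u
    have h0 : (Pi.single (sig hX u) 1 + Pi.single (sig hX u) 1 :
        ↥(Sn X {v} 1) → ZMod 2) = 0 := by
      funext ρ
      rw [Pi.add_apply, Pi.zero_apply]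
      exact CharTwo.add_self_eq_zero _
    rw [h0]
    exact Submodule.zero_mem _
  | @cons x y w h p ih =>
    have h1 := edge_mem_range hX G hG h
    have key : (Pi.single (sig hX x) 1 + Pi.single (sig hX w) 1 :
        ↥(Sn X {v} 1) → ZMod 2) =
        (Pi.single (sig hX x) 1 + Pi.single (sig hX y) 1) +
        (Pi.single (sig hX y) 1 + Pi.single (sig hX w) 1) := by
      funext ρ
      simp only [Pi.add_apply]
      exact char2_rearrange _ _ _
    rw [key]
    exact Submodule.add_mem _ h1 ih

end Aux13

namespace Aux13
variable {X : Finset (Finset V)} {v : V}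

open scoped Classical

lemma comp_boundary_zero (hX : IsSimplicialComplex X) (G : SimpleGraph (W X v))
    (hG : ∀ a b, G.Adj a b ↔ a ≠ b ∧ ({a.1, b.1} : Finset V) ∈ link X {v}) :
    (Phi hX G).comp (localBoundary X {v} 1) = 0 := by
  apply LinearMap.pi_ext
  intro t x
  have hx : (Pi.single t x : ↥(Sn X {v} 2) → ZMod 2) = x • Pi.single t 1 := by
    funext τ
    rw [Pi.smul_apply, Pi.single_apply, Pi.single_apply]
    split <;> simp
  rw [LinearMap.comp_apply, hx, map_smul, map_smul]
  obtain ⟨a, b, hab, ha, hb, hablk, ht⟩ := S2_struct hX t.2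
  set a' : W X v := ⟨a, ha⟩
  set b' : W X v := ⟨b, hb⟩
  have hadj : G.Adj a' b' := (hG a' b').mpr ⟨fun h => hab (congrArg Subtype.val h), hablk⟩
  have hteq : t = (⟨{v, a, b}, triple_mem_Sn hX hab (W_ne_v a') (W_ne_v b') hablk⟩ :
      ↥(Sn X {v} 2)) := Subtype.ext ht
  rw [hteq, boundary_single_pair hX a' b' hab hablk, Phi_edge hX G hadj]
  simp

lemma range_le_ker_Phi (hX : IsSimplicialComplex X) (G : SimpleGraph (W X v))
    (hG : ∀ a b, G.Adj a b ↔ a ≠ b ∧ ({a.1, b.1} : Finset V) ∈ link X {v}) :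
    LinearMap.range (localBoundary X {v} 1) ≤ LinearMap.ker (Phi hX G) := by
  rintro f ⟨g, rfl⟩
  rw [LinearMap.mem_ker, ← LinearMap.comp_apply, comp_boundary_zero hX G hG]
  rfl

lemma zmod2_eq_one {x : ZMod 2} (h : x ≠ 0) : x = 1 := by
  revert h; revert x; decide

lemma ker_Phi_le_range (hX : IsSimplicialComplex X) (G : SimpleGraph (W X v))
    (hG : ∀ a b, G.Adj a b ↔ a ≠ b ∧ ({a.1, b.1} : Finset V) ∈ link X {v}) :
    LinearMap.ker (Phi hX G) ≤ LinearMap.range (localBoundary X {v} 1) := by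
  suffices H : ∀ (n : ℕ) (f : ↥(Sn X {v} 1) → ZMod 2), Phi hX G f = 0 →
      (Finset.univ.filter fun τ => f τ ≠ 0).card = n →
      f ∈ LinearMap.range (localBoundary X {v} 1) by
    intro f hf
    exact H _ f (LinearMap.mem_ker.mp hf) rfl
  intro n
  induction n using Nat.strong_induction_on with
  | _ n ih =>
    intro f hf hcard
    by_cases h0 : f = 0
    · rw [h0]; exact Submodule.zero_mem _
    · obtain ⟨τ0, hτ0⟩ := Function.ne_iff.mp h0
      have hfτ0 : f τ0 = 1 := zmod2_eq_one hτ0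
      set c := G.connectedComponentMk (pim hX τ0) with hc
      have hsum : (∑ τ : ↥(Sn X {v} 1),
          if G.connectedComponentMk (pim hX τ) = c then f τ else 0) = 0 :=
        congrFun hf c
      have hex : ∃ τ1, τ1 ≠ τ0 ∧ G.connectedComponentMk (pim hX τ1) = c ∧ f τ1 ≠ 0 := by
        by_contra hcon
        push_neg at hcon
        rw [Fintype.sum_eq_single τ0 (fun τ hτ => ?_)] at hsum
        · rw [if_pos rfl, hfτ0] at hsum
          exact one_ne_zero hsum
        · split
          · next hcc => exact hcon τ hτ hcc
          · rfl
      obtain ⟨τ1, hne, hcc, hfτ1⟩ := hex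
      have hfτ1' : f τ1 = 1 := zmod2_eq_one hfτ1
      have hreach : G.Reachable (pim hX τ0) (pim hX τ1) :=
        SimpleGraph.ConnectedComponent.eq.mp (hc ▸ hcc.symm)
      have hE : (Pi.single τ0 1 + Pi.single τ1 1 : ↥(Sn X {v} 1) → ZMod 2) ∈
          LinearMap.range (localBoundary X {v} 1) := by
        have := reachable_mem_range hX G hG hreach
        rwa [sig_pim, sig_pim] at this
      set E : ↥(Sn X {v} 1) → ZMod 2 := Pi.single τ0 1 + Pi.single τ1 1 with hEdef
      set f' := f + E with hf'
      have hPhiE : Phi hX G E = 0 := LinearMap.mem_ker.mp (range_le_ker_Phi hX G hG hE)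
      have hPhif' : Phi hX G f' = 0 := by
        rw [hf', map_add, hf, hPhiE, add_zero]
      have hsupp : (Finset.univ.filter fun τ => f' τ ≠ 0) ⊆
          (Finset.univ.filter fun τ => f τ ≠ 0).erase τ0 := by
        intro τ hτ
        rw [Finset.mem_filter] at hτ
        have hτne : f' τ ≠ 0 := hτ.2
        have hEτ0 : E τ0 = 1 := by
          rw [hEdef, Pi.add_apply, Pi.single_eq_same, Pi.single_eq_of_ne (Ne.symm hne),
            add_zero]
        have hEτ1 : E τ1 = 1 := by
          rw [hEdef, Pi.add_apply, Pi.single_eq_same, Pi.single_eq_of_ne hne, zero_add]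
        rcases eq_or_ne τ τ0 with rfl | h1
        · exfalso; apply hτne
          rw [hf', Pi.add_apply, hfτ0, hEτ0]; decide
        rcases eq_or_ne τ τ1 with rfl | h2
        · exfalso; apply hτne
          rw [hf', Pi.add_apply, hfτ1', hEτ1]; decide
        · have hEτ : E τ = 0 := by
            rw [hEdef, Pi.add_apply, Pi.single_eq_of_ne h1, Pi.single_eq_of_ne h2, add_zero]
          rw [Finset.mem_erase]
          refine ⟨h1, Finset.mem_filter.mpr ⟨Finset.mem_univ _, ?_⟩⟩
          rwa [hf', Pi.add_apply, hEτ, add_zero] at hτne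
      have hτ0mem : τ0 ∈ (Finset.univ.filter fun τ => f τ ≠ 0) :=
        Finset.mem_filter.mpr ⟨Finset.mem_univ _, hτ0⟩
      have hlt : (Finset.univ.filter fun τ => f' τ ≠ 0).card < n := by
        calc (Finset.univ.filter fun τ => f' τ ≠ 0).card
            ≤ ((Finset.univ.filter fun τ => f τ ≠ 0).erase τ0).card :=
              Finset.card_le_card hsupp
          _ < (Finset.univ.filter fun τ => f τ ≠ 0).card :=
              Finset.card_erase_lt_of_mem hτ0mem
          _ = n := hcard
      have hf'mem : f' ∈ LinearMap.range (localBoundary X {v} 1) :=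
        ih _ hlt f' hPhif' rfl
      have : f = f' + E := by
        funext τ
        rw [hf', Pi.add_apply, Pi.add_apply, add_assoc, CharTwo.add_self_eq_zero, add_zero]
      rw [this]
      exact Submodule.add_mem _ hf'mem hE

end Aux13

namespace Aux13
variable {X : Finset (Finset V)} {v : V}
open scoped Classical

lemma Phi_surjective (hX : IsSimplicialComplex X) (G : SimpleGraph (W X v)) :
    Function.Surjective (Phi hX G) := by
  haveI : Finite G.ConnectedComponent := Quot.finite _
  haveI : Fintype G.ConnectedComponent := Fintype.ofFinite _
  rw [← LinearMap.range_eq_top, eq_top_iff]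
  intro g _
  have hsingle : ∀ c : G.ConnectedComponent,
      (Pi.single c 1 : G.ConnectedComponent → ZMod 2) ∈ LinearMap.range (Phi hX G) := by
    intro c
    obtain ⟨w, hw⟩ := c.exists_rep
    refine ⟨Pi.single (sig hX w) 1, ?_⟩
    rw [Phi_single_sig]
    funext c'
    rw [Pi.single_apply]
    have : (G.connectedComponentMk w = c') ↔ (c' = c) := by
      rw [show G.connectedComponentMk w = c from hw, eq_comm]
    rw [if_congr this rfl rfl]
  have hg : g = ∑ c : G.ConnectedComponent, g c • Pi.single c 1 := by
    funext c'
    rw [Finset.sum_apply]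
    rw [Fintype.sum_eq_single c' (fun c hc => ?_)]
    · rw [Pi.smul_apply, Pi.single_eq_same, smul_eq_mul, mul_one]
    · rw [Pi.smul_apply, Pi.single_eq_of_ne (Ne.symm hc), smul_zero]
  rw [hg]
  exact Submodule.sum_mem _ fun c _ => Submodule.smul_mem _ _ (hsingle c)

lemma S0_mem_eq (hv : ({v} : Finset V) ∈ X) {τ : Finset V} (h : τ ∈ Sn X {v} 0) :
    τ = {v} := by
  rw [S0_eq hv] at h
  exact mem_singleton.mp h

lemma T_apply (hX : IsSimplicialComplex X) (hv : ({v} : Finset V) ∈ X)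
    (f : ↥(Sn X {v} 1) → ZMod 2) (ρ : ↥(Sn X {v} 0)) :
    localBoundary X {v} 0 f ρ = ∑ τ : ↥(Sn X {v} 1), f τ := by
  show (∑ τ : ↥(Sn X {v} 1),
    (((τ.1 \ {v}).filter fun u => τ.1.erase u = ρ.1).card : ZMod 2) * f τ) = _
  refine Finset.sum_congr rfl fun τ _ => ?_
  have hρ : ρ.1 = {v} := S0_mem_eq hv ρ.2
  set w := pim hX τ with hwdef
  have hτ : τ.1 = {v, w.1} := pim_spec hX τ
  have hwv : w.1 ≠ v := W_ne_v w
  have hdiff : τ.1 \ {v} = {w.1} := by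
    rw [hτ]; ext x; simp
    constructor
    · rintro ⟨rfl | rfl, hx⟩
      · exact absurd rfl hx
      · rfl
    · rintro rfl
      exact ⟨Or.inr rfl, hwv⟩
  have herase : τ.1.erase w.1 = {v} := by
    rw [hτ]; ext x; simp
    constructor
    · rintro ⟨hx, rfl | rfl⟩
      · rfl
      · exact absurd rfl hx
    · rintro rfl
      exact ⟨Ne.symm hwv, Or.inl rfl⟩
  rw [hdiff, filter_singleton, if_pos (by rw [herase, hρ])]
  simp

lemma sum_Phi (hX : IsSimplicialComplex X) (G : SimpleGraph (W X v))
    [Fintype G.ConnectedComponent] (f : ↥(Sn X {v} 1) → ZMod 2) :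
    ∑ c : G.ConnectedComponent, Phi hX G f c = ∑ τ : ↥(Sn X {v} 1), f τ := by
  show (∑ c : G.ConnectedComponent, ∑ τ : ↥(Sn X {v} 1),
    if G.connectedComponentMk (pim hX τ) = c then f τ else 0) = _
  rw [Finset.sum_comm]
  refine Finset.sum_congr rfl fun τ _ => ?_
  rw [Finset.sum_ite_eq]
  simp

lemma ker_Phi_le_ker_T (hX : IsSimplicialComplex X) (hv : ({v} : Finset V) ∈ X)
    (G : SimpleGraph (W X v)) :
    LinearMap.ker (Phi hX G) ≤ LinearMap.ker (localBoundary X {v} 0) := by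
  haveI : Finite G.ConnectedComponent := Quot.finite _
  haveI : Fintype G.ConnectedComponent := Fintype.ofFinite _
  intro f hf
  rw [LinearMap.mem_ker] at hf ⊢
  funext ρ
  rw [T_apply hX hv, Pi.zero_apply, ← sum_Phi hX G, hf]
  simp

lemma T_surjective (hX : IsSimplicialComplex X) (hv : ({v} : Finset V) ∈ X)
    (w : W X v) : Function.Surjective (localBoundary X ({v} : Finset V) 0) := by
  intro g
  have hρ0 : ({v} : Finset V) ∈ Sn X {v} 0 := by rw [S0_eq hv]; exact mem_singleton_self _
  set ρ0 : ↥(Sn X {v} 0) := ⟨{v}, hρ0⟩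
  refine ⟨g ρ0 • Pi.single (sig hX w) 1, ?_⟩
  funext ρ
  have hρρ0 : ρ = ρ0 := Subtype.ext (S0_mem_eq hv ρ.2)
  rw [map_smul, Pi.smul_apply, T_apply hX hv, hρρ0]
  rw [Fintype.sum_eq_single (sig hX w) (fun τ hτ => Pi.single_eq_of_ne hτ _)]
  rw [Pi.single_eq_same, smul_eq_mul, mul_one]

end Aux13



set_option synthInstance.maxHeartbeats 1000000 in
set_option maxHeartbeats 1600000 in
/-- Let `v` be a vertex of a finite abstract simplicial complex `X` whose
link is nonempty, and let `G` be the graph whose vertices are the `w` with `{w} ∈ lk({v})`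
and whose edges are the pairs `{w, w'} ∈ lk({v})`. Then the dimension of `H_1(C_•^{{v}})`
over `ℤ/2` is `c - 1`, where `c` is the number of connected components of `G`. -/
theorem first_local_homology_counts_link_components
    {V : Type*} [DecidableEq V] (X : Finset (Finset V)) (hX : IsSimplicialComplex X)
    (v : V) (hv : ({v} : Finset V) ∈ X) (hlk : (link X {v}).Nonempty)
    (G : SimpleGraph {w : V // ({w} : Finset V) ∈ link X {v}})
    (hG : ∀ a b, G.Adj a b ↔ a ≠ b ∧ ({a.1, b.1} : Finset V) ∈ link X {v}) :
    localHomologyDim X {v} 1 = Nat.card G.ConnectedComponent - 1 := by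
  classical
  haveI : Finite G.ConnectedComponent := Quot.finite _
  haveI : Fintype G.ConnectedComponent := Fintype.ofFinite _
  -- a vertex of the link
  obtain ⟨ρ, hρ⟩ := hlk
  have hρX : ρ ∈ X := Finset.mem_filter.mp hρ |>.1
  obtain ⟨w, hw⟩ := hX.1 ρ hρX
  set w0 : Aux13.W X v := ⟨w, Aux13.singleton_mem_link hX hρ hw⟩
  -- abbreviations
  set T := localBoundary X {v} 0 with hT
  set D := localBoundary X {v} 1 with hD
  set Φ := Aux13.Phi hX G with hΦ
  -- range D = ker Φ
  have heq : LinearMap.range D = LinearMap.ker Φ :=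
    le_antisymm (Aux13.range_le_ker_Phi hX G hG) (Aux13.ker_Phi_le_range hX G hG)
  have hcyc : localCycles X {v} 1 = LinearMap.ker T := rfl
  have hle : LinearMap.range D ≤ localCycles X {v} 1 := by
    rw [hcyc, heq]
    exact Aux13.ker_Phi_le_ker_T hX hv G
  -- rank-nullity for T
  have hTsurj : Function.Surjective T := Aux13.T_surjective hX hv w0
  have hrankT : Module.finrank (ZMod 2) (LinearMap.range T) +
      Module.finrank (ZMod 2) (LinearMap.ker T) =
      Module.finrank (ZMod 2) (↥(Sn X {v} 1) → ZMod 2) :=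
    LinearMap.finrank_range_add_finrank_ker T
  have hrangeT : Module.finrank (ZMod 2) (LinearMap.range T) = 1 := by
    rw [LinearMap.range_eq_top.mpr hTsurj]
    rw [finrank_top, Module.finrank_fintype_fun_eq_card, Fintype.card_coe,
      Aux13.S0_eq hv, card_singleton]
  -- rank-nullity for Φ
  have hΦsurj : Function.Surjective Φ := Aux13.Phi_surjective hX G
  have hrankΦ : Module.finrank (ZMod 2) (LinearMap.range Φ) +
      Module.finrank (ZMod 2) (LinearMap.ker Φ) =
      Module.finrank (ZMod 2) (↥(Sn X {v} 1) → ZMod 2) :=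
    LinearMap.finrank_range_add_finrank_ker Φ
  have hrangeΦ : Module.finrank (ZMod 2) (LinearMap.range Φ) =
      Nat.card G.ConnectedComponent := by
    rw [LinearMap.range_eq_top.mpr hΦsurj, finrank_top,
      Module.finrank_fintype_fun_eq_card, Nat.card_eq_fintype_card]
  -- connected components nonempty
  have hcpos : 1 ≤ Nat.card G.ConnectedComponent := by
    haveI : Nonempty G.ConnectedComponent := ⟨G.connectedComponentMk w0⟩
    rw [Nat.card_eq_fintype_card]
    exact Fintype.card_pos
  -- quotient dimension
  have hquot : localHomologyDim X {v} 1 +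
      Module.finrank (ZMod 2)
        ((LinearMap.range D).comap (localCycles X {v} 1).subtype) =
      Module.finrank (ZMod 2) (localCycles X {v} 1) :=
    Submodule.finrank_quotient_add_finrank _
  have hcomap : Module.finrank (ZMod 2)
      ((LinearMap.range D).comap (localCycles X {v} 1).subtype) =
      Module.finrank (ZMod 2) (LinearMap.range D) :=
    (Submodule.comapSubtypeEquivOfLe hle).finrank_eq
  have hcycT : Module.finrank (ZMod 2) (localCycles X {v} 1) =
      Module.finrank (ZMod 2) (LinearMap.ker T) := by rw [hcyc]
  have hDker : Module.finrank (ZMod 2) (LinearMap.range D) =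
      Module.finrank (ZMod 2) (LinearMap.ker Φ) := by rw [heq]
  omega
end
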